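/- arXiv:math/0505627 — 5 statements merged into one kernel-verified Lean document; each statement's English description precedes it below -/
import Mathlib

section
/- Let f: S^1 → S^1 be z ↦ z^d with d ≥ 2, identified with the map x ↦ d·x (mod 1) on ℝ/ℤ. If B ⊂ S^1 is a finite set with card(B) = M ≥ 2 on which f is injective and orientation preserving, then for every hole H = (u,w) of B (a connected component of S^1 \ B, traversed counterclockwise from u to w), the arc (f(u), f(w)) is a hole of f(B), and its length equals d·len(H) (mod 1). -/
open MeasureTheory Set Metric Filter Topology

noncomputable section

abbrev S1 := AddCircle (1 : ℝ)

def fd (d : ℕ) : S1 → S1 := fun x => d • x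

def len (A : Set S1) : ℝ := (volume A).toReal

def IsHole (B H : Set S1) : Prop := ∃ x ∈ Bᶜ, H = connectedComponentIn Bᶜ x

def openArc (u w : S1) : Set S1 := {x | SBtw.sbtw u x w}

def OrientPresOn (g : S1 → S1) (B : Set S1) : Prop :=
  Set.InjOn g B ∧ ∀ a ∈ B, ∀ b ∈ B, ∀ c ∈ B, SBtw.sbtw a b c → SBtw.sbtw (g a) (g b) (g c)

def emb (x : S1) : ℂ := (AddCircle.toCircle x : ℂ)

def chord (a b : S1) : Set ℂ := segment ℝ (emb a) (emb b)

def CH (A : Set S1) : Set ℂ := convexHull ℝ (emb '' A)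

def Wandering (d N : ℕ) (T : Set S1) : Prop :=
  ∀ i j : ℕ, ((fd d)^[i] '' T).ncard = N ∧
    (i ≠ j → Disjoint (CH ((fd d)^[i] '' T)) (CH ((fd d)^[j] '' T)))

def IsHoleEnum (B : Set S1) {N : ℕ} (H : Fin N → Set S1) : Prop :=
  Function.Injective H ∧ (∀ k, IsHole B (H k)) ∧ (∀ G, IsHole B G → ∃ k, H k = G) ∧
  ∀ k l : Fin N, k ≤ l → len (H k) ≤ len (H l)

def rem (d : ℕ) (s : ℝ) : ℝ := s - (⌊(d : ℝ) * s⌋ : ℝ) / d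

def ImageHoleRel (g : S1 → S1) (H K : Set S1) : Prop :=
  ∃ u w : S1, u ≠ w ∧ H = openArc u w ∧ K = openArc (g u) (g w)

def InLimitSet (d : ℕ) (T : Set S1) (a b : S1) : Prop :=
  ∃ φ : ℕ → ℕ, StrictMono φ ∧ ∃ u v : ℕ → S1,
    (∀ n, u n ∈ (fd d)^[φ n] '' T ∧ v n ∈ (fd d)^[φ n] '' T) ∧
    Tendsto (fun n => hausdorffDist (chord (u n) (v n)) (chord a b)) atTop (nhds 0)

/- ### Auxiliary lemmas -/

lemma tIco (hp : (0:ℝ) < 1) (x : ℝ) : toIcoMod hp 0 x = Int.fract x := by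
  rw [toIcoMod_eq_fract_mul]; simp

lemma tIoc (hp : (0:ℝ) < 1) (c : ℝ) (h1 : 0 < c) (h2 : c ≤ 1) : toIocMod hp 0 c = c :=
  (toIocMod_eq_self hp).2 (by constructor <;> simpa)

lemma tIocneg (hp : (0:ℝ) < 1) (c : ℝ) (h1 : 0 < c) (h2 : c < 1) : toIocMod hp 0 (-c) = 1 - c := by
  rw [toIocMod_eq_iff hp]
  refine ⟨⟨by linarith, by simp; linarith⟩, -1, by push_cast [zsmul_eq_mul]; ring⟩

lemma fract_shift (x : ℝ) (h0 : 0 ≤ x + 1) (h1 : x + 1 < 1) : Int.fract x = x + 1 := by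
  rw [← Int.fract_add_intCast x 1]
  push_cast
  exact Int.fract_eq_self.2 ⟨h0, h1⟩

lemma coe_eq_coe {x y : ℝ} (k : ℤ) (h : x - y = k) : (x : S1) = y := by
  refine QuotientAddGroup.eq_iff_sub_mem.2 ?_
  rw [h]
  exact AddSubgroup.mem_zmultiples_iff.2 ⟨k, by simp⟩

lemma coe_fract (a s : ℝ) : ((a + Int.fract s : ℝ) : S1) = ↑(a + s) :=
  coe_eq_coe (-⌊s⌋) (by rw [Int.fract]; push_cast; ring)

lemma coe_ne_coe (a c : ℝ) (hc : 0 < c) (hc1 : c < 1) : (a : S1) ≠ ↑(a + c) := by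
  intro h
  obtain ⟨k, hk⟩ := AddSubgroup.mem_zmultiples_iff.1 (QuotientAddGroup.eq_iff_sub_mem.1 h)
  have hk' : (k : ℝ) = -c := by
    have := hk; rw [zsmul_eq_mul, mul_one] at this; linarith
  have h1 : (k : ℝ) < 0 := by rw [hk']; linarith
  have h2 : (-1 : ℝ) < k := by rw [hk']; linarith
  have h1' : k < 0 := by exact_mod_cast h1
  have h2' : (-1 : ℤ) < k := by exact_mod_cast h2
  omega

lemma sbtw_coe (a t c : ℝ) (hc : 0 < c) (hc1 : c < 1) (ht : 0 ≤ t) (ht1 : t < 1) :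
    SBtw.sbtw (a : S1) (↑(a+t)) (↑(a+c)) ↔ 0 < t ∧ t < c := by
  rw [sbtw_iff_btw_not_btw, QuotientAddGroup.btw_coe_iff', QuotientAddGroup.btw_coe_iff']
  rw [show a + t - a = t by ring, show a + c - a = c by ring,
    show a + t - (a + c) = t - c by ring, show a - (a + c) = -c by ring,
    tIco, tIco, tIoc _ c hc hc1.le, tIocneg _ c hc hc1, Int.fract_eq_self.2 ⟨ht, ht1⟩]
  rcases lt_trichotomy t c with h | h | h
  · rcases eq_or_lt_of_le ht with h0 | h0
    · rw [← h0]
      have : Int.fract (0 - c) = 1 - c := by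
        rw [fract_shift _ (by linarith) (by linarith)]; ring
      rw [this]
      simp
    · rw [fract_shift _ (by linarith) (by linarith)]
      constructor
      · intro _; exact ⟨h0, h⟩
      · rintro ⟨-, -⟩; exact ⟨h.le, by intro hh; linarith⟩
  · subst h
    simp only [sub_self, Int.fract_zero]
    constructor
    · rintro ⟨-, hn⟩; exact absurd (by linarith) hn
    · rintro ⟨-, hh⟩; linarith
  · constructor
    · rintro ⟨hh, -⟩; linarith
    · rintro ⟨-, hh⟩; linarith

lemma openArc_self (x : S1) : openArc x x = ∅ := by
  ext y; simp only [openArc, mem_setOf_eq, mem_empty_iff_false, iff_false]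
  exact sbtw_irrefl_left_right

lemma openArc_rep (a c : ℝ) (hc : 0 < c) (hc1 : c < 1) :
    openArc (a : S1) (↑(a+c)) = QuotientAddGroup.mk '' Ioo a (a+c) := by
  ext x
  constructor
  · intro hx
    obtain ⟨y, rfl⟩ := QuotientAddGroup.mk_surjective x
    set t := Int.fract (y - a) with htdef
    have hxy : (y : S1) = ↑(a + t) := by
      rw [htdef, coe_fract]; ring_nf
    simp only [openArc, mem_setOf_eq] at hx
    rw [hxy] at hx
    rw [sbtw_coe a t c hc hc1 (Int.fract_nonneg _) (Int.fract_lt_one _)] at hx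
    exact ⟨a + t, ⟨by linarith [hx.1], by linarith [hx.2]⟩, hxy.symm⟩
  · rintro ⟨y, ⟨h1, h2⟩, rfl⟩
    have hxy : (y : S1) = ↑(a + (y - a)) := by ring_nf
    simp only [openArc, mem_setOf_eq]
    rw [hxy, sbtw_coe a _ c hc hc1 (by linarith) (by linarith)]
    exact ⟨by linarith, by linarith⟩

lemma openArc_isOpen (a c : ℝ) (hc : 0 < c) (hc1 : c < 1) :
    IsOpen (openArc (a : S1) (↑(a+c))) := by
  rw [openArc_rep a c hc hc1]
  exact QuotientAddGroup.isOpenMap_coe _ isOpen_Ioo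

lemma openArc_preconnected (a c : ℝ) (hc : 0 < c) (hc1 : c < 1) :
    IsPreconnected (openArc (a : S1) (↑(a+c))) := by
  rw [openArc_rep a c hc hc1]
  exact isPreconnected_Ioo.image _ continuous_quotient_mk'.continuousOn

lemma len_openArc (a c : ℝ) (hc : 0 < c) (hc1 : c < 1) :
    len (openArc (a : S1) (↑(a+c))) = c := by
  have hmeas : MeasurableSet (openArc (a : S1) (↑(a+c))) :=
    (openArc_isOpen a c hc hc1).measurableSet
  have key : QuotientAddGroup.mk ⁻¹' (openArc (a : S1) (↑(a+c))) ∩ Ioc a (a + 1)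
      = Ioo a (a + c) := by
    rw [openArc_rep a c hc hc1]
    ext y
    constructor
    · rintro ⟨⟨z, hz, hzy⟩, hy⟩
      obtain ⟨k, hk⟩ := AddSubgroup.mem_zmultiples_iff.1 (QuotientAddGroup.eq_iff_sub_mem.1 hzy)
      have hk' : (k : ℝ) = z - y := by rw [← hk]; simp
      have hk0 : k = 0 := by
        have h1 : (k : ℝ) < 1 := by rw [hk']; simp at hz hy ⊢; linarith [hz.2, hy.1]
        have h2 : (-1 : ℝ) < k := by rw [hk']; simp at hz hy ⊢; linarith [hz.1, hy.2]
        have h1' : k < 1 := by exact_mod_cast h1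
        have h2' : (-1 : ℤ) < k := by exact_mod_cast h2
        omega
      rw [hk0] at hk'
      have hzy' : z = y := by have := hk'.symm; simp at this; linarith
      rwa [← hzy']
    · intro hy
      exact ⟨⟨y, hy, rfl⟩, ⟨hy.1, by linarith [hy.2]⟩⟩
  rw [len, AddCircle.add_projection_respects_measure (T := 1) a hmeas, key, Real.volume_Ioo]
  rw [ENNReal.toReal_ofReal (by linarith)]
  ring

lemma sbtw_of_ne {α : Type*} [CircularOrder α] {p q x : α} (hpq : p ≠ q) (hxp : x ≠ p)
    (hxq : x ≠ q) : SBtw.sbtw p x q ∨ SBtw.sbtw q x p := by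
  rcases btw_total p x q with h | h
  · left
    refine sbtw_iff_btw_not_btw.2 ⟨h, fun h' => ?_⟩
    rcases btw_antisymm h h' with h'' | h'' | h''
    · exact hxp h''.symm
    · exact hxq h''
    · exact hpq h''.symm
  · right
    refine sbtw_iff_btw_not_btw.2 ⟨h, fun h' => ?_⟩
    rcases btw_antisymm h h' with h'' | h'' | h''
    · exact hxq h''.symm
    · exact hxp h''
    · exact hpq h''

lemma fd_coe (d : ℕ) (a : ℝ) : fd d ↑a = ((d * a : ℝ) : S1) := by
  show d • ((QuotientAddGroup.mk' (AddSubgroup.zmultiples (1:ℝ))) a) = _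
  rw [← map_nsmul]
  simp [nsmul_eq_mul]

/-- image-hole of a hole under an orientation-preserving restriction. -/
theorem stmt0 (d M : ℕ) (hd : 2 ≤ d) (B : Set S1) (hBfin : B.Finite)
    (hM : B.ncard = M) (hM2 : 2 ≤ M)
    (hop : OrientPresOn (fd d) B)
    (H : Set S1) (u w : S1) (hH : IsHole B H) (huw : H = openArc u w)
    (hu : u ∈ B) (hw : w ∈ B) :
    IsHole ((fd d) '' B) (openArc (fd d u) (fd d w)) ∧
    len (openArc (fd d u) (fd d w)) = Int.fract ((d : ℝ) * len H) := by
  obtain ⟨x₀B, hx₀B, hHcc⟩ := hH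
  have hHne : H.Nonempty := ⟨x₀B, hHcc ▸ mem_connectedComponentIn hx₀B⟩
  have hHsub : H ⊆ Bᶜ := hHcc ▸ connectedComponentIn_subset _ _
  obtain ⟨a, rfl⟩ := QuotientAddGroup.mk_surjective u
  obtain ⟨b, rfl⟩ := QuotientAddGroup.mk_surjective w
  set c : ℝ := Int.fract (b - a) with hcdef
  have hwc : ((b : ℝ) : S1) = ↑(a + c) :=
    coe_eq_coe ⌊b - a⌋ (by rw [hcdef, Int.fract]; ring)
  -- replace w by a + c
  rw [hwc] at hw huw ⊢
  have hc1 : c < 1 := Int.fract_lt_one _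
  have hc0 : 0 < c := by
    rcases eq_or_lt_of_le (Int.fract_nonneg (b - a)) with h0 | h0
    · exfalso
      rw [← hcdef] at h0
      have hHe : H = ∅ := by rw [huw, ← h0, add_zero, openArc_self]
      exact hHne.ne_empty hHe
    · exact h0
  have huwne : ((a : ℝ) : S1) ≠ ↑(a + c) := coe_ne_coe a c hc0 hc1
  have hlenH : len H = c := by rw [huw]; exact len_openArc a c hc0 hc1
  set c' : ℝ := Int.fract ((d : ℝ) * c) with hc'def
  have hfu : fd d ((a : ℝ) : S1) = ↑((d : ℝ) * a) := fd_coe d a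
  have hfw : fd d (((a + c : ℝ)) : S1) = ↑((d : ℝ) * a + c') := by
    rw [fd_coe]
    exact coe_eq_coe ⌊(d : ℝ) * c⌋ (by rw [hc'def, Int.fract]; ring)
  have hc'1 : c' < 1 := Int.fract_lt_one _
  have hc'0 : 0 < c' := by
    rcases eq_or_lt_of_le (Int.fract_nonneg ((d : ℝ) * c)) with h0 | h0
    · exfalso
      rw [← hc'def] at h0
      rw [← h0, add_zero, ← hfu] at hfw
      exact huwne (hop.1 hu hw hfw.symm)
    · exact h0
  have hfune : (((d : ℝ) * a : ℝ) : S1) ≠ ↑((d : ℝ) * a + c') := coe_ne_coe _ c' hc'0 hc'1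
  rw [hfu, hfw]
  set A : Set S1 := openArc (((d : ℝ) * a : ℝ) : S1) ↑((d : ℝ) * a + c') with hAdef
  -- A avoids the image of B
  have hAsub : A ⊆ ((fd d) '' B)ᶜ := by
    rintro y hy ⟨b', hb'B, rfl⟩
    simp only [hAdef, openArc, mem_setOf_eq, ← hfu, ← hfw] at hy
    have hb'u : b' ≠ ((a : ℝ) : S1) := by
      rintro rfl; exact sbtw_irrefl_left hy
    have hb'w : b' ≠ (((a + c : ℝ)) : S1) := by
      rintro rfl; exact sbtw_irrefl_right hy
    rcases sbtw_of_ne huwne hb'u hb'w with h | h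
    · exact hHsub (huw ▸ h) hb'B
    · exact sbtw_asymm (hop.2 _ hw _ hb'B _ hu h) hy
  -- the basepoint
  have hx₀A : (↑((d : ℝ) * a + c' / 2) : S1) ∈ A := by
    simp only [hAdef, openArc, mem_setOf_eq]
    rw [show (d : ℝ) * a + c' / 2 = (d : ℝ) * a + (c' / 2) by ring]
    exact (sbtw_coe _ _ _ hc'0 hc'1 (by linarith) (by linarith)).2 ⟨by linarith, by linarith⟩
  have hx₀c : (↑((d : ℝ) * a + c' / 2) : S1) ∈ ((fd d) '' B)ᶜ := hAsub hx₀A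
  -- the complementary arc
  set A' : Set S1 := openArc (↑((d : ℝ) * a + c') : S1) (((d : ℝ) * a : ℝ) : S1) with hA'def
  have hA'rw : A' = openArc (↑((d : ℝ) * a + c') : S1) ↑(((d : ℝ) * a + c') + (1 - c')) := by
    rw [hA'def, show (((d : ℝ) * a : ℝ) : S1) = ↑(((d : ℝ) * a + c') + (1 - c')) from
      (coe_eq_coe (-1) (by push_cast; ring))]
  have hAopen : IsOpen A := openArc_isOpen _ _ hc'0 hc'1
  have hA'open : IsOpen A' := by
    rw [hA'rw]; exact openArc_isOpen _ _ (by linarith) (by linarith)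
  have hAconn : IsPreconnected A := openArc_preconnected _ _ hc'0 hc'1
  have hdisj : Disjoint A A' := by
    rw [disjoint_left]
    intro x hxA hxA'
    simp only [hAdef, hA'def, openArc, mem_setOf_eq] at hxA hxA'
    exact sbtw_asymm hxA' hxA
  have hsplit : ((fd d) '' B)ᶜ ⊆ A ∪ A' := by
    intro x hx
    have hxu : x ≠ (((d : ℝ) * a : ℝ) : S1) := by
      rintro rfl; exact hx ⟨_, hu, hfu⟩
    have hxw : x ≠ (↑((d : ℝ) * a + c') : S1) := by
      rintro rfl; exact hx ⟨_, hw, hfw⟩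
    exact sbtw_of_ne hfune hxu hxw
  constructor
  · refine ⟨_, hx₀c, ?_⟩
    apply Subset.antisymm
    · exact hAconn.subset_connectedComponentIn hx₀A hAsub
    · refine IsPreconnected.subset_left_of_subset_union hAopen hA'open hdisj
        ((connectedComponentIn_subset _ _).trans hsplit)
        ⟨_, mem_connectedComponentIn hx₀c, hx₀A⟩ isPreconnected_connectedComponentIn
  · rw [len_openArc _ _ hc'0 hc'1, hlenH]
end
end

section
/- Let f(x) = d·x (mod 1) with d ≥ 2 and let B ⊂ S^1 be a closed set on which f is injective. Then f restricted to B is orientation preserving if and only if S^1 \ B contains d − 1 pairwise disjoint open arcs each of length 1/d. -/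
open MeasureTheory Set Metric Filter Topology

noncomputable section

/-!
Measure positions from a point `a ∈ B` by the scaled coordinate `y = d σ` in `[0, d)`, where `σ` is
the representative of `x - a` in `[0, 1)`; then `f x - f a` has coordinate `fract y`. Orientation
preservation says that `fract` is strictly increasing on the positive coordinates of points of `B`,
and `d - 1` disjoint arcs of length `1 / d` missing `B` become `d - 1` disjoint unit gaps in
`[0, d]` missing those coordinates. Given monotonicity, the `j`-th gap starts at `j` plus the
supremum of `fract` over the coordinates below `j + 1`. Conversely, for coordinates `0 < y < y'`,
counting the gaps left of `y`, between `y` and `y'`, and right of `y'` gives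
`⌊y'⌋ - ⌊y⌋ ≤ y' - y`, that is `fract y ≤ fract y'`.
-/

open Function

lemma Finset.card_mul_le_of_pairwiseDisjoint_Ioo {ι : Type*} (T : Finset ι) (t : ι → ℝ)
    {ℓ x y : ℝ} (hℓ : 0 ≤ ℓ) (hxy : x ≤ y)
    (hsub : ∀ k ∈ T, Set.Ioo (t k) (t k + ℓ) ⊆ Set.Ioo x y)
    (hdisj : (T : Set ι).PairwiseDisjoint fun k => Set.Ioo (t k) (t k + ℓ)) :
    T.card * ℓ ≤ y - x :=
  calc T.card * ℓ = volume.real (⋃ k ∈ T, Set.Ioo (t k) (t k + ℓ)) := by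
        rw [measureReal_biUnion_finset hdisj (fun _ _ => measurableSet_Ioo)
          (fun _ _ => measure_Ioo_lt_top.ne)]
        simp [hℓ]
    _ ≤ volume.real (Set.Ioo x y) :=
        measureReal_mono (iUnion₂_subset hsub) measure_Ioo_lt_top.ne
    _ = y - x := Real.volume_real_Ioo_of_le hxy

section UnitGaps

variable {ι : Type*} [Fintype ι] {d : ℕ} {t : ι → ℝ}

lemma fract_le_fract_of_unit_gaps (hcard : d ≤ Fintype.card ι + 1)
    (ht : ∀ k, 0 ≤ t k ∧ t k + 1 ≤ d)
    (hdisj : Pairwise (Disjoint on (fun k => Ioo (t k) (t k + 1))))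
    {s s' : ℝ} (hs : 0 ≤ s) (hss' : s ≤ s') (hs' : s' ≤ d)
    (hsgap : ∀ k, s ∉ Ioo (t k) (t k + 1)) (hs'gap : ∀ k, s' ∉ Ioo (t k) (t k + 1))
    (hint : Int.fract s' ≠ 0) : Int.fract s ≤ Int.fract s' := by
  classical
  set N : ℝ → ℝ → ℕ := fun x y =>
    (Finset.univ.filter fun k => x ≤ t k ∧ t k + 1 ≤ y).card
  have hN : ∀ x y, x ≤ y → (N x y : ℝ) ≤ y - x := fun x y hxy => by
    simpa using Finset.card_mul_le_of_pairwiseDisjoint_Ioo _ t zero_le_one hxy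
      (fun k hk => Ioo_subset_Ioo (Finset.mem_filter.1 hk).2.1 (Finset.mem_filter.1 hk).2.2)
      (hdisj.set_pairwise _)
  have hsplit : ∀ k, (0 ≤ t k ∧ t k + 1 ≤ s) ∨ (s ≤ t k ∧ t k + 1 ≤ s') ∨
      (s' ≤ t k ∧ t k + 1 ≤ d) := by
    intro k
    have hs := hsgap k
    have hs' := hs'gap k
    simp only [mem_Ioo, not_and, not_lt] at hs hs'
    obtain ⟨h0, hd⟩ := ht k
    rcases le_or_gt (t k + 1) s with h1 | h1
    · exact Or.inl ⟨h0, h1⟩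
    rcases le_or_gt s' (t k) with h2 | h2
    · exact Or.inr (Or.inr ⟨h2, hd⟩)
    refine Or.inr (Or.inl ⟨?_, hs' h2⟩)
    by_contra! h3
    linarith [hs h3]
  have hcover : Fintype.card ι ≤ N 0 s + N s s' + N s' d := by
    simp only [N, Finset.card_filter, ← Finset.sum_add_distrib, Fintype.card_eq_sum_ones]
    refine Finset.sum_le_sum fun k _ => ?_
    rcases hsplit k with h | h | h <;> simp only [h, and_self, if_true] <;> omega
  have hleft : (N 0 s : ℝ) ≤ ⌊s⌋ := by
    exact_mod_cast Int.le_floor.2 (by simpa using hN 0 s hs)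
  have hright : (⌊s'⌋ : ℝ) + 1 ≤ d - N s' d := by
    have hlt : (⌊s'⌋ : ℝ) < s' :=
      (Int.floor_le s').lt_of_ne fun h => hint (by rw [Int.fract, h, sub_self])
    have : (⌊s'⌋ : ℝ) < ((d - N s' d : ℤ) : ℝ) := by
      push_cast
      linarith [hN s' d hs']
    exact_mod_cast Int.add_one_le_iff.2 (by exact_mod_cast this)
  have hcover' : (d : ℝ) ≤ N 0 s + N s s' + N s' d + 1 := by
    exact_mod_cast hcard.trans (by omega)
  rw [← Int.self_sub_floor, ← Int.self_sub_floor]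
  linarith [hN s s' hss']

end UnitGaps

section GapOffset

variable {S : Set ℝ} {j : ℕ} {y : ℝ}

def gapOffset (S : Set ℝ) (j : ℕ) : ℝ := sSup (insert 0 (Int.fract '' (S ∩ Ioo 0 (j + 1))))

lemma bddAbove_insert_zero_image_fract (A : Set ℝ) : BddAbove (insert 0 (Int.fract '' A)) :=
  ⟨1, by rintro _ (rfl | ⟨y, -, rfl⟩); exacts [zero_le_one, (Int.fract_lt_one y).le]⟩

lemma gapOffset_nonneg : 0 ≤ gapOffset S j :=
  le_csSup (bddAbove_insert_zero_image_fract _) (mem_insert _ _)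

lemma gapOffset_le_one : gapOffset S j ≤ 1 :=
  csSup_le (insert_nonempty _ _) <| by
    rintro _ (rfl | ⟨y, -, rfl⟩); exacts [zero_le_one, (Int.fract_lt_one y).le]

lemma gapOffset_mono : Monotone (gapOffset S) := fun j l hjl =>
  csSup_le_csSup (bddAbove_insert_zero_image_fract _) (insert_nonempty _ _) <|
    insert_subset_insert <| image_mono <| inter_subset_inter_right _ <|
      Ioo_subset_Ioo_right (by gcongr)

lemma fract_le_gapOffset (hy : y ∈ S) (hy0 : 0 < y) (hyj : y < j + 1) :
    Int.fract y ≤ gapOffset S j :=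
  le_csSup (bddAbove_insert_zero_image_fract _)
    (mem_insert_of_mem _ ⟨y, ⟨hy, hy0, hyj⟩, rfl⟩)

lemma gapOffset_le_fract (hmono : StrictMonoOn Int.fract (S ∩ Ioi 0)) (hy : y ∈ S)
    (hyj : j + 1 < y) : gapOffset S j ≤ Int.fract y :=
  csSup_le (insert_nonempty _ _) <| by
    rintro _ (rfl | ⟨z, ⟨hz, hz0, hzj⟩, rfl⟩)
    · exact Int.fract_nonneg y
    · exact (hmono ⟨hz, hz0⟩ ⟨hy, hz0.trans (hzj.trans hyj)⟩ (hzj.trans hyj)).le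

lemma notMem_gap (hint : ∀ y ∈ S, 0 < y → Int.fract y ≠ 0)
    (hmono : StrictMonoOn Int.fract (S ∩ Ioi 0)) (hy : y ∈ S) :
    y ∉ Ioo (j + gapOffset S j) (j + gapOffset S j + 1) := by
  rintro ⟨hlo, hhi⟩
  have hy0 : 0 < y := (add_nonneg (Nat.cast_nonneg j) gapOffset_nonneg).trans_lt hlo
  have hdecomp := Int.floor_add_fract y
  rcases lt_trichotomy y (j + 1) with hyj | hyj | hyj
  · have hfloor : (⌊y⌋ : ℝ) ≤ j := by
      have : ⌊y⌋ < (j : ℤ) + 1 := Int.floor_lt.2 (by exact_mod_cast hyj)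
      exact_mod_cast Int.lt_add_one_iff.1 this
    linarith [fract_le_gapOffset hy hy0 hyj]
  · exact hint y hy hy0 (by rw [hyj]; exact_mod_cast Int.fract_natCast (j + 1))
  · have hfloor : (j : ℝ) + 1 ≤ ⌊y⌋ := by
      exact_mod_cast Int.le_floor.2 (by exact_mod_cast hyj.le)
    linarith [gapOffset_le_fract hmono hy hyj]

lemma exists_unit_gaps (d : ℕ) (hint : ∀ y ∈ S, 0 < y → Int.fract y ≠ 0)
    (hmono : StrictMonoOn Int.fract (S ∩ Ioi 0)) :
    ∃ t : Fin (d - 1) → ℝ, (∀ k, 0 ≤ t k ∧ t k + 1 ≤ d) ∧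
      (∀ k, ∀ y ∈ S, y ∉ Ioo (t k) (t k + 1)) ∧
      Pairwise (Disjoint on (fun k => Ioo (t k) (t k + 1))) := by
  refine ⟨fun k => k + gapOffset S k,
    fun k => ⟨add_nonneg (Nat.cast_nonneg _) gapOffset_nonneg, ?_⟩,
    fun k y hy => notMem_gap hint hmono hy, ?_⟩
  · have : (k : ℝ) + 2 ≤ d := by exact_mod_cast (by omega : (k : ℕ) + 2 ≤ d)
    linarith [gapOffset_le_one (S := S) (j := k)]
  · refine (pairwise_disjoint_on _).2 fun k l hkl => Set.disjoint_left.2 fun y hk hl => ?_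
    have : (k : ℝ) + 1 ≤ l := by exact_mod_cast (hkl : (k : ℕ) < l)
    linarith [hk.2, hl.1, gapOffset_mono (S := S) hkl.le]

end GapOffset

namespace S1

def coord (z : S1) : ℝ := AddCircle.equivIco 1 0 z

@[simp] lemma coord_coe (x : ℝ) : coord x = Int.fract x := by
  simp [coord, AddCircle.coe_equivIco_mk_apply]

@[simp] lemma coe_coord (z : S1) : ((coord z : ℝ) : S1) = z :=
  (AddCircle.equivIco 1 0).symm_apply_apply z

lemma coord_nonneg (z : S1) : 0 ≤ coord z := by
  induction z using QuotientAddGroup.induction_on with | H x => simp [Int.fract_nonneg]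

lemma coord_lt_one (z : S1) : coord z < 1 := by
  induction z using QuotientAddGroup.induction_on with | H x => simp [Int.fract_lt_one]

lemma coord_of_mem_Ico {x : ℝ} (hx : x ∈ Ico 0 1) : coord x = x := by
  rw [coord_coe, Int.fract_eq_self.2 hx]

@[simp] lemma coord_eq_zero_iff {z : S1} : coord z = 0 ↔ z = 0 := by
  refine ⟨fun h => by rw [← coe_coord z, h]; rfl, ?_⟩
  rintro rfl
  simpa using coord_coe 0

@[simp] lemma coord_zero : coord 0 = 0 := coord_eq_zero_iff.2 rfl

lemma coe_equivIocMod_eq (z : S1) :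
    (QuotientAddGroup.equivIocMod (zero_lt_one' ℝ) 0 z : ℝ) = if z = 0 then 1 else coord z := by
  induction z using QuotientAddGroup.induction_on with | H x =>
  rw [QuotientAddGroup.equivIocMod_coe]
  have hmod : (0 : ℝ) ≡ x [PMOD 1] ↔ (x : S1) = 0 := by
    rw [AddCommGroup.modEq_iff_eq_mod_zmultiples, eq_comm]; rfl
  split_ifs with h
  · simpa using (AddCommGroup.modEq_iff_toIocMod_eq_right _).1 (hmod.2 h)
  · rw [coord_coe, ← toIcoMod_zero_one,
      (AddCommGroup.not_modEq_iff_toIcoMod_eq_toIocMod _).1 (hmod.not.2 h)]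

lemma sbtw_iff_coord (a b c : S1) :
    sbtw a b c ↔ 0 < coord (b - a) ∧ coord (b - a) < coord (c - a) := by
  rw [sbtw_iff_not_btw, btw_cyclic]
  change ¬ coord (c - a) ≤ (QuotientAddGroup.equivIocMod _ 0 (b - a) : ℝ) ↔ _
  rw [coe_equivIocMod_eq, not_le]
  split_ifs with h
  · simp [h, (coord_lt_one _).not_gt]
  · simp [(coord_nonneg _).lt_of_ne' (coord_eq_zero_iff.not.2 h)]

lemma coord_injective : Injective coord :=
  Subtype.val_injective.comp (AddCircle.equivIco 1 0).injective

lemma coord_neg {z : S1} (hz : z ≠ 0) : coord (-z) = 1 - coord z := by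
  induction z using QuotientAddGroup.induction_on with | H x =>
  have hx : Int.fract x ≠ 0 := by rwa [← coord_coe, Ne, coord_eq_zero_iff]
  rw [← AddCircle.coe_neg, coord_coe, coord_coe, Int.fract_neg hx]

lemma coord_fd_sub (d : ℕ) (x a : S1) :
    coord (fd d x - fd d a) = Int.fract (d * coord (x - a)) := by
  rw [fd, fd, ← smul_sub]
  conv_lhs => rw [← coe_coord (x - a), ← AddCircle.coe_nsmul, nsmul_eq_mul, coord_coe]

lemma mem_openArc {u w x : S1} : x ∈ openArc u w ↔ sbtw u x w := Iff.rfl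

lemma mem_openArc_iff (a x : S1) {t ℓ : ℝ} (ht : 0 ≤ t) (hℓ : 0 ≤ ℓ) (hℓ1 : ℓ < 1)
    (htℓ : t + ℓ ≤ 1) :
    x ∈ openArc (a + t) (a + t + ℓ) ↔ coord (x - a) ∈ Ioo t (t + ℓ) := by
  have hx : x - (a + t) = ((coord (x - a) - t : ℝ) : S1) := by
    rw [AddCircle.coe_sub, coe_coord]; abel
  rw [mem_openArc, sbtw_iff_coord, add_sub_cancel_left, hx, coord_coe, coord_coe,
    Int.fract_eq_self.2 ⟨hℓ, hℓ1⟩]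
  have h0 := coord_nonneg (x - a)
  have h1 := coord_lt_one (x - a)
  rcases le_or_gt t (coord (x - a)) with hle | hlt
  · rw [Int.fract_eq_self.2 ⟨by linarith, by linarith⟩, mem_Ioo]
    constructor <;> rintro ⟨_, _⟩ <;> constructor <;> linarith
  · have : Int.fract (coord (x - a) - t) = coord (x - a) - t + 1 := by
      rw [← Int.fract_add_one, Int.fract_eq_self.2 ⟨by linarith, by linarith⟩]
    rw [this, mem_Ioo]
    constructor <;> rintro ⟨_, _⟩ <;> linarith

lemma coord_sub_add_le_one {a u : S1} {ℓ : ℝ} (hℓ : 0 ≤ ℓ) (hℓ1 : ℓ < 1)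
    (ha : a ∉ openArc u (u + ℓ)) : coord (u - a) + ℓ ≤ 1 := by
  by_contra! h
  have hua : u - a ≠ 0 := fun h0 => by rw [h0, coord_zero] at h; linarith
  refine ha ?_
  rw [mem_openArc, sbtw_iff_coord, add_sub_cancel_left, coord_coe,
    Int.fract_eq_self.2 ⟨hℓ, hℓ1⟩, ← neg_sub, coord_neg hua]
  constructor <;> linarith [coord_lt_one (u - a)]

lemma measurable_coord : Measurable coord :=
  measurable_subtype_coe.comp (AddCircle.measurableEquivIco 1 0).measurable

lemma volume_coord_mem_Ioo {ℓ : ℝ} (hℓ : ℓ ≤ 1) :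
    volume (coord ⁻¹' Ioo 0 ℓ) = ENNReal.ofReal ℓ := by
  rw [AddCircle.add_projection_respects_measure 1 0 (measurable_coord measurableSet_Ioo),
    zero_add]
  have hpre : QuotientAddGroup.mk ⁻¹' (coord ⁻¹' Ioo 0 ℓ) ∩ Ioc 0 1 = Ioo 0 ℓ := by
    ext y
    simp only [mem_inter_iff, mem_preimage, mem_Ioc, mem_Ioo]
    constructor
    · rintro ⟨hy, hy0, hy1⟩
      rcases hy1.lt_or_eq with hy1 | rfl
      · rwa [coord_of_mem_Ico ⟨hy0.le, hy1⟩] at hy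
      · simp at hy
    · rintro ⟨hy0, hyℓ⟩
      rw [coord_of_mem_Ico ⟨hy0.le, by linarith⟩]
      exact ⟨⟨hy0, hyℓ⟩, hy0, by linarith⟩
  rw [hpre, Real.volume_Ioo, sub_zero]

lemma len_openArc (u : S1) {ℓ : ℝ} (hℓ : 0 ≤ ℓ) (hℓ1 : ℓ < 1) :
    len (openArc u (u + ℓ)) = ℓ := by
  have : openArc u (u + ℓ) = (· + -u) ⁻¹' (coord ⁻¹' Ioo 0 ℓ) := by
    ext x
    simp [mem_openArc, sbtw_iff_coord, Int.fract_eq_self.2 ⟨hℓ, hℓ1⟩, ← sub_eq_add_neg]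
  rw [len, this, measure_preimage_add_right, volume_coord_mem_Ioo hℓ1.le,
    ENNReal.toReal_ofReal hℓ]

lemma mem_openArc_div_iff {d : ℕ} (hd : 2 ≤ d) (a x : S1) {t : ℝ} (ht0 : 0 ≤ t)
    (ht1 : t + 1 ≤ d) :
    x ∈ openArc (a + ↑(t / d)) (a + ↑(t / d) + ↑((1 : ℝ) / d)) ↔
      d * coord (x - a) ∈ Ioo t (t + 1) := by
  have hd0 : (0 : ℝ) < d := by positivity
  have hd1 : (1 : ℝ) / d < 1 := by rw [div_lt_one hd0]; exact_mod_cast hd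
  rw [mem_openArc_iff a x (by positivity) (by positivity) hd1
    (by rw [← add_div, div_le_one hd0]; exact ht1)]
  simp only [mem_Ioo, ← add_div, div_lt_iff₀' hd0, lt_div_iff₀' hd0]

lemma exists_arcs_of_orientPresOn {d : ℕ} (hd : 2 ≤ d) {B : Set S1} {a : S1} (ha : a ∈ B)
    (hB : OrientPresOn (fd d) B) :
    ∃ I : Fin (d - 1) → Set S1,
      (∀ k, ∃ u : S1, I k = openArc u (u + (((1 : ℝ) / d : ℝ) : S1)) ∧
        len (I k) = 1 / d) ∧
      (∀ k, I k ⊆ Bᶜ) ∧ (∀ k l, k ≠ l → Disjoint (I k) (I l)) := by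
  have hd0 : (0 : ℝ) < d := by positivity
  have hd1 : (1 : ℝ) / d < 1 := by rw [div_lt_one hd0]; exact_mod_cast hd
  set φ : S1 → ℝ := fun x => d * coord (x - a)
  have hint : ∀ y ∈ φ '' B, 0 < y → Int.fract y ≠ 0 := by
    rintro _ ⟨x, hx, rfl⟩ hx0 hfract
    rw [← coord_fd_sub, coord_eq_zero_iff, sub_eq_zero] at hfract
    simp [φ, hB.1 hx ha hfract] at hx0
  have hmono : StrictMonoOn Int.fract (φ '' B ∩ Ioi 0) := by
    rintro _ ⟨⟨x, hx, rfl⟩, hx0⟩ _ ⟨⟨y, hy, rfl⟩, -⟩ hxy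
    have habc : sbtw a x y := (sbtw_iff_coord a x y).2
      ⟨pos_of_mul_pos_right hx0 hd0.le, lt_of_mul_lt_mul_left hxy hd0.le⟩
    have := ((sbtw_iff_coord _ _ _).1 (hB.2 a ha x hx y hy habc)).2
    rwa [coord_fd_sub, coord_fd_sub] at this
  obtain ⟨t, ht, hgap, hdisj⟩ := exists_unit_gaps d hint hmono
  have hmem : ∀ k x, x ∈ openArc (a + ↑(t k / d)) (a + ↑(t k / d) + ↑((1 : ℝ) / d)) ↔
      φ x ∈ Ioo (t k) (t k + 1) := fun k x => mem_openArc_div_iff hd a x (ht k).1 (ht k).2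
  refine ⟨fun k => openArc (a + ↑(t k / d)) (a + ↑(t k / d) + ↑((1 : ℝ) / d)),
    ?_, ?_, ?_⟩
  · exact fun k => ⟨_, rfl, len_openArc _ (by positivity) hd1⟩
  · exact fun k x hx hxB => hgap k _ ⟨x, hxB, rfl⟩ ((hmem k x).1 hx)
  · exact fun k l hkl => Set.disjoint_left.2 fun x hk hl =>
      Set.disjoint_left.1 (hdisj hkl) ((hmem k x).1 hk) ((hmem l x).1 hl)

lemma exists_unit_gaps_of_arcs {d : ℕ} (hd : 2 ≤ d) (I : Fin (d - 1) → Set S1)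
    (hI : ∀ k, ∃ u : S1, I k = openArc u (u + (((1 : ℝ) / d : ℝ) : S1)))
    (hdisj : ∀ k l, k ≠ l → Disjoint (I k) (I l)) {a : S1} (ha : ∀ k, a ∉ I k) :
    ∃ t : Fin (d - 1) → ℝ, (∀ k, 0 ≤ t k ∧ t k + 1 ≤ d) ∧
      (∀ k x, x ∈ I k ↔ d * coord (x - a) ∈ Ioo (t k) (t k + 1)) ∧
      Pairwise (Disjoint on (fun k => Ioo (t k) (t k + 1))) := by
  have hd0 : (0 : ℝ) < d := by positivity
  have hd1 : (1 : ℝ) / d < 1 := by rw [div_lt_one hd0]; exact_mod_cast hd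
  choose u hu using hI
  set t : Fin (d - 1) → ℝ := fun k => d * coord (u k - a)
  have ht k : 0 ≤ t k ∧ t k + 1 ≤ d := by
    have h := coord_sub_add_le_one (by positivity) hd1 (hu k ▸ ha k)
    have h' := mul_le_mul_of_nonneg_left h hd0.le
    rw [mul_add, mul_one_div_cancel hd0.ne', mul_one] at h'
    exact ⟨mul_nonneg hd0.le (coord_nonneg _), h'⟩
  have hmem k x : x ∈ I k ↔ d * coord (x - a) ∈ Ioo (t k) (t k + 1) := by
    have hu' : u k = a + ↑(t k / d) := by simp [t, hd0.ne']
    rw [hu k, hu']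
    exact mem_openArc_div_iff hd a x (ht k).1 (ht k).2
  refine ⟨t, ht, hmem, fun k l hkl => Set.disjoint_left.2 fun y hk hl => ?_⟩
  have hy : d * coord (a + ↑(y / d) - a) = y := by
    have hy0 : 0 ≤ y / d := div_nonneg ((ht k).1.trans hk.1.le) hd0.le
    have hy1 : y / d < 1 := by rw [div_lt_one hd0]; linarith [hk.2, (ht k).2]
    rw [add_sub_cancel_left, coord_of_mem_Ico ⟨hy0, hy1⟩]
    field_simp
  exact Set.disjoint_left.1 (hdisj k l hkl) ((hmem k _).2 (by rwa [hy]))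
    ((hmem l _).2 (by rwa [hy]))

lemma orientPresOn_of_arcs {d : ℕ} (hd : 2 ≤ d) {B : Set S1} (hinj : InjOn (fd d) B)
    (I : Fin (d - 1) → Set S1)
    (hI : ∀ k, ∃ u : S1, I k = openArc u (u + (((1 : ℝ) / d : ℝ) : S1)))
    (hIB : ∀ k, I k ⊆ Bᶜ) (hdisj : ∀ k l, k ≠ l → Disjoint (I k) (I l)) :
    OrientPresOn (fd d) B := by
  have hd0 : (0 : ℝ) < d := by positivity
  refine ⟨hinj, fun a ha b hb c hc habc => ?_⟩
  obtain ⟨t, ht, hmem, hdisj'⟩ :=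
    exists_unit_gaps_of_arcs hd I hI hdisj fun k h => hIB k h ha
  set φ : S1 → ℝ := fun x => d * coord (x - a)
  have hgap k : ∀ x ∈ B, φ x ∉ Ioo (t k) (t k + 1) := fun x hx h => hIB k ((hmem k x).2 h) hx
  have hfract_ne : ∀ x ∈ B, ∀ y ∈ B, x ≠ y → Int.fract (φ x) ≠ Int.fract (φ y) := by
    intro x hx y hy hxy h
    rw [← coord_fd_sub, ← coord_fd_sub] at h
    exact hxy (hinj hx hy (sub_left_injective (coord_injective h)))
  have hφa : Int.fract (φ a) = 0 := by simp [φ]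
  have hab : a ≠ b := fun h => by subst h; exact sbtw_irrefl_left habc
  have hbc : b ≠ c := fun h => by subst h; exact sbtw_irrefl_right habc
  have hac : a ≠ c := fun h => by subst h; exact sbtw_irrefl_left_right habc
  have hφbc : φ b ≤ φ c :=
    mul_le_mul_of_nonneg_left ((sbtw_iff_coord a b c).1 habc).2.le hd0.le
  have hle : Int.fract (φ b) ≤ Int.fract (φ c) :=
    fract_le_fract_of_unit_gaps (by simp; omega) ht hdisj' (mul_nonneg hd0.le (coord_nonneg _))
      hφbc (mul_le_of_le_one_right hd0.le (coord_lt_one _).le) (fun k => hgap k b hb)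
      (fun k => hgap k c hc) (hφa ▸ hfract_ne c hc a ha hac.symm)
  rw [sbtw_iff_coord, coord_fd_sub, coord_fd_sub]
  exact ⟨(Int.fract_nonneg _).lt_of_ne (hφa ▸ hfract_ne a ha b hb hab),
    hle.lt_of_ne (hfract_ne b hb c hc hbc)⟩

end S1

theorem stmt2_general (d : ℕ) (hd : 2 ≤ d) (B : Set S1)
    (hinj : Set.InjOn (fd d) B) :
    OrientPresOn (fd d) B ↔
      ∃ I : Fin (d - 1) → Set S1,
        (∀ k, ∃ u : S1, I k = openArc u (u + (((1 : ℝ) / d : ℝ) : S1)) ∧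
          len (I k) = 1 / d) ∧
        (∀ k, I k ⊆ Bᶜ) ∧
        (∀ k l, k ≠ l → Disjoint (I k) (I l)) := by
  refine ⟨fun hB => ?_, fun ⟨I, hI, hIB, hdisj⟩ =>
    S1.orientPresOn_of_arcs hd hinj I (fun k => (hI k).imp fun _ h => h.1) hIB hdisj⟩
  rcases B.eq_empty_or_nonempty with rfl | ⟨a, ha⟩
  · obtain ⟨I, hI, -, hdisj⟩ := S1.exists_arcs_of_orientPresOn hd (mem_singleton (0 : S1))
      ⟨injOn_singleton _ _, by simp [sbtw_irrefl]⟩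
    exact ⟨I, hI, fun k => by simp, hdisj⟩
  · exact S1.exists_arcs_of_orientPresOn hd ha hB

/-- orientation preserving iff the complement contains d-1 pairwise
disjoint open arcs of length 1/d. -/
theorem stmt2 (d : ℕ) (hd : 2 ≤ d) (B : Set S1) (hBcl : IsClosed B)
    (hinj : Set.InjOn (fd d) B) :
    OrientPresOn (fd d) B ↔
      ∃ I : Fin (d - 1) → Set S1,
        (∀ k, ∃ u : S1, I k = openArc u (u + (((1 : ℝ) / d : ℝ) : S1)) ∧
          len (I k) = 1 / d) ∧
        (∀ k, I k ⊆ Bᶜ) ∧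
        (∀ k l, k ≠ l → Disjoint (I k) (I l)) :=
  stmt2_general d hd B hinj
end
end

section
/- Let Q, B ⊂ S^1 be unlinked closed sets with card(B) ≥ 3 and card(Q) ≥ 3. Suppose there exists τ > 0 such that B has at least two holes of length ≥ τ and Q has at least two holes of length ≥ τ. Then Q is contained in a hole of B whose length is strictly greater than τ. -/
open MeasureTheory Set Metric Filter Topology

noncomputable section

/-! A line separating the convex hulls of `Q` and `B` cuts the circle in two arcs, so `Q` lies in
a single hole `H` of `B` and `B` in a single hole of `Q`. Hence one of the two long holes `G` of
`Q` misses `B`; its closure is connected, avoids `B` and meets `Q ⊆ H`, so `closure G ⊆ H`.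
As `H` is a proper open subset of the connected circle it is not closed, so `H \ closure G` is a
nonempty open set, of positive measure, and `τ ≤ len G < len H`. -/

open Real

instance : LocallyConnectedSpace S1 :=
  (QuotientAddGroup.isQuotientMap_mk _).isCoinducing.locallyConnectedSpace

theorem IsCompact.convexHull {E : Type*} [NormedAddCommGroup E] [NormedSpace ℝ E]
    [FiniteDimensional ℝ E] {s : Set E} (hs : IsCompact s) : IsCompact (convexHull ℝ s) := by
  rcases s.eq_empty_or_nonempty with rfl | ⟨s₀, hs₀⟩
  · simp
  set n := Module.finrank ℝ E + 1
  suffices _root_.convexHull ℝ s = (fun p : (Fin n → E) × (Fin n → ℝ) => ∑ i, p.2 i • p.1 i) ''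
      ((univ.pi fun _ => s) ×ˢ stdSimplex ℝ (Fin n)) by
    rw [this]
    exact ((isCompact_univ_pi fun _ => hs).prod (isCompact_stdSimplex ℝ _)).image (by fun_prop)
  refine Subset.antisymm (fun x hx => ?_) ?_
  · -- Carathéodory: at most `n` affinely independent points; pad with `s₀` at weight 0.
    obtain ⟨ι, _, z, w, hzs, hind, hw0, hw1, rfl⟩ := eq_pos_convex_span_of_mem_convexHull hx
    have hcard : Fintype.card ι ≤ n :=
      hind.card_le_finrank_succ.trans (Nat.succ_le_succ (Submodule.finrank_le _))
    set e : ι ↪ Fin n := (Fintype.equivFin ι).toEmbedding.trans (Fin.castLEEmb hcard)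
    have hoff : ∀ j ∉ range e, ¬∃ i, e i = j := fun j hj => by simpa using hj
    refine ⟨(Function.extend e z fun _ => s₀, Function.extend e w 0),
      ⟨fun j _ => ?_, fun j => ?_, ?_⟩, ?_⟩
    · by_cases hj : j ∈ range e
      · obtain ⟨i, rfl⟩ := hj
        simpa [e.injective.extend_apply] using hzs (mem_range_self i)
      · simpa [Function.extend_apply' _ _ _ (hoff j hj)] using hs₀
    · by_cases hj : j ∈ range e
      · obtain ⟨i, rfl⟩ := hj
        simpa [e.injective.extend_apply] using (hw0 i).le
      · simp [Function.extend_apply' _ _ _ (hoff j hj)]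
    · rw [← hw1]
      exact (Fintype.sum_of_injective e e.injective w (Function.extend e w 0)
        (fun j hj => Function.extend_apply' _ _ _ (hoff j hj))
        (fun i => (e.injective.extend_apply _ _ _).symm)).symm
    · exact (Fintype.sum_of_injective e e.injective _ _
        (fun j hj => by simp [Function.extend_apply' _ _ _ (hoff j hj)])
        (fun i => by simp [e.injective.extend_apply])).symm
  · rintro _ ⟨⟨z, w⟩, ⟨hz, hw⟩, rfl⟩
    exact (convex_convexHull ℝ s).sum_mem (fun i _ => hw.1 i) (by simpa using hw.2)
      (fun i _ => subset_convexHull ℝ s (hz i trivial))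

theorem IsOpen.closure_connectedComponentIn_inter_subset {X : Type*} [TopologicalSpace X]
    [LocallyConnectedSpace X] {U : Set X} (hU : IsOpen U) (x : X) :
    closure (connectedComponentIn U x) ∩ U ⊆ connectedComponentIn U x := by
  rintro y ⟨hy, hyU⟩
  obtain ⟨z, hzy, hzx⟩ := mem_closure_iff_nhds.1 hy _
    (hU.connectedComponentIn.mem_nhds (mem_connectedComponentIn hyU))
  rw [connectedComponentIn_eq hzx, ← connectedComponentIn_eq hzy]
  exact mem_connectedComponentIn hyU

theorem closure_connectedComponentIn_compl_subset {X : Type*} [TopologicalSpace X]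
    [LocallyConnectedSpace X] [PreconnectedSpace X] {Q B : Set X} (hQ : IsClosed Q)
    (hQne : Q.Nonempty) {x q : X} (hx : x ∈ Qᶜ) (hQB : Q ⊆ connectedComponentIn Bᶜ q)
    (hGB : Disjoint (connectedComponentIn Qᶜ x) B) :
    closure (connectedComponentIn Qᶜ x) ⊆ connectedComponentIn Bᶜ q := by
  set G := connectedComponentIn Qᶜ x
  have hclG : closure G ⊆ G ∪ Q := fun z hz =>
    or_iff_not_imp_right.2 fun hzQ =>
      hQ.isOpen_compl.closure_connectedComponentIn_inter_subset x ⟨hz, hzQ⟩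
  obtain ⟨y, hyG, hyQ⟩ : ∃ y ∈ closure G, y ∈ Q := by
    obtain ⟨q', hq'⟩ := hQne
    obtain ⟨y, hy⟩ := nonempty_frontier_iff.2 ⟨⟨x, mem_connectedComponentIn hx⟩,
      fun h => connectedComponentIn_subset Qᶜ x (h ▸ mem_univ q') hq'⟩
    rw [hQ.isOpen_compl.connectedComponentIn.frontier_eq] at hy
    exact ⟨y, hy.1, (hclG hy.1).resolve_left hy.2⟩
  have hclB : closure G ⊆ Bᶜ := fun z hz =>
    (hclG hz).elim (fun h => hGB.notMem_of_mem_left h)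
      (fun h => connectedComponentIn_subset _ _ (hQB h))
  rw [connectedComponentIn_eq (hQB hyQ)]
  exact isPreconnected_connectedComponentIn.closure.subset_connectedComponentIn hyG hclB

theorem cos_le_max_cos {x y z : ℝ} (hx : 0 ≤ x) (hxy : x ≤ y) (hyz : y ≤ z) (hz : z ≤ 2 * π) :
    cos y ≤ max (cos x) (cos z) := by
  rcases le_total y π with hy | hy
  · exact (cos_le_cos_of_nonneg_of_le_pi hx hy hxy).trans (le_max_left _ _)
  · rw [← cos_two_pi_sub y, ← cos_two_pi_sub z]
    exact (cos_le_cos_of_nonneg_of_le_pi (by linarith) (by linarith) (by linarith)).trans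
      (le_max_right _ _)

theorem emb_coe (t : ℝ) : emb t = Complex.exp (↑(2 * π * t) * Complex.I) := by
  simp [emb, AddCircle.toCircle_apply_mk, Circle.coe_exp]

theorem continuous_emb : Continuous emb := by unfold emb; fun_prop

theorem exists_clm_emb_eq_mul_cos (f : ℂ →L[ℝ] ℝ) :
    ∃ r ≥ 0, ∃ c : ℝ, ∀ t : ℝ, f (emb t) = r * cos (2 * π * (t - c)) := by
  set w : ℂ := ⟨f 1, f Complex.I⟩
  have hf : ∀ z : ℂ, f z = z.re * f 1 + z.im * f Complex.I := fun z => by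
    calc f z = f (z.re • 1 + z.im • Complex.I) := by congr 1; apply Complex.ext <;> simp
      _ = _ := by rw [map_add, map_smul, map_smul, smul_eq_mul, smul_eq_mul]
  refine ⟨‖w‖, norm_nonneg w, Complex.arg w / (2 * π), fun t => ?_⟩
  have h2π : 2 * π * (t - Complex.arg w / (2 * π)) = 2 * π * t - Complex.arg w := by
    field_simp
  have hre : ‖w‖ * cos (Complex.arg w) = f 1 := Complex.norm_mul_cos_arg w
  have him : ‖w‖ * sin (Complex.arg w) = f Complex.I := Complex.norm_mul_sin_arg w
  rw [hf, emb_coe, Complex.exp_ofReal_mul_I_re, Complex.exp_ofReal_mul_I_im, h2π, cos_sub]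
  linear_combination (-cos (2 * π * t)) * hre - sin (2 * π * t) * him

theorem isPreconnected_setOf_clm_emb_lt (f : ℂ →L[ℝ] ℝ) (u : ℝ) :
    IsPreconnected {x : S1 | f (emb x) < u} := by
  obtain ⟨r, hr, c, hf⟩ := exists_clm_emb_eq_mul_cos f
  -- Starting the parametrization at a maximum of `f ∘ emb` makes the sublevel set an interval.
  have hset : {x : S1 | f (emb x) < u} =
      (fun t : ℝ => ((t + c : ℝ) : S1)) '' {t ∈ Icc 0 1 | r * cos (2 * π * t) < u} := by
    ext x
    refine ⟨fun hx => ?_, ?_⟩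
    · obtain ⟨t, ht, htx⟩ := AddCircle.eq_coe_Ico (x - (c : S1))
      have hx' : x = ((t + c : ℝ) : S1) := by rw [AddCircle.coe_add, htx, sub_add_cancel]
      refine ⟨t, ⟨Ico_subset_Icc_self ht, ?_⟩, hx'.symm⟩
      rwa [hx', mem_ofPred_eq, hf, add_sub_cancel_right] at hx
    · rintro ⟨t, ⟨-, ht⟩, rfl⟩
      rwa [mem_ofPred_eq, hf, add_sub_cancel_right]
  rw [hset]
  refine IsPreconnected.image (Set.OrdConnected.isPreconnected ⟨fun a ha b hb t ht => ?_⟩) _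
    ((AddCircle.continuous_mk' 1).comp (continuous_add_const c)).continuousOn
  refine ⟨Icc_subset_Icc ha.1.1 hb.1.2 ht, ?_⟩
  have hπ := pi_pos
  calc r * cos (2 * π * t) ≤ r * max (cos (2 * π * a)) (cos (2 * π * b)) :=
        mul_le_mul_of_nonneg_left (cos_le_max_cos (by nlinarith [ha.1.1]) (by nlinarith [ht.1])
          (by nlinarith [ht.2]) (by nlinarith [hb.1.2])) hr
    _ = max (r * cos (2 * π * a)) (r * cos (2 * π * b)) := mul_max_of_nonneg _ _ hr
    _ < u := max_lt ha.2 hb.2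

theorem exists_subset_connectedComponentIn_compl {Q B : Set S1} (hQ : IsClosed Q)
    (hB : IsClosed B) (hQne : Q.Nonempty) (hunl : Disjoint (CH Q) (CH B)) :
    ∃ q ∈ Bᶜ, Q ⊆ connectedComponentIn Bᶜ q := by
  obtain ⟨f, u, v, hfu, huv, hfv⟩ := geometric_hahn_banach_compact_closed
    (convex_convexHull ℝ _) (hQ.isCompact.image continuous_emb).convexHull
    (convex_convexHull ℝ _) (hB.isCompact.image continuous_emb).convexHull.isClosed hunl
  have hQS : Q ⊆ {x | f (emb x) < u} := fun x hx =>
    hfu _ (subset_convexHull ℝ _ (mem_image_of_mem _ hx))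
  have hSB : {x | f (emb x) < u} ⊆ Bᶜ := fun x hx hxB =>
    (hfv _ (subset_convexHull ℝ _ (mem_image_of_mem _ hxB))).not_gt (huv.trans' hx)
  obtain ⟨q, hq⟩ := hQne
  exact ⟨q, hSB (hQS hq),
    hQS.trans ((isPreconnected_setOf_clm_emb_lt f u).subset_connectedComponentIn (hQS hq) hSB)⟩

theorem IsHole.eq_of_not_disjoint {Q B G : Set S1} (hG : IsHole Q G) {b : S1}
    (hB : B ⊆ connectedComponentIn Qᶜ b) (hGB : ¬Disjoint G B) :
    G = connectedComponentIn Qᶜ b := by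
  obtain ⟨x, -, rfl⟩ := hG
  obtain ⟨z, hzG, hzB⟩ := not_disjoint_iff.1 hGB
  rw [connectedComponentIn_eq hzG, connectedComponentIn_eq (hB hzB)]

theorem len_lt_len_of_closure_subset {G H : Set S1} (hH : IsOpen H) (hHne : H.Nonempty)
    (hHuniv : H ≠ univ) (hGH : closure G ⊆ H) : len G < len H := by
  have hdiff : (H \ closure G).Nonempty := by
    by_contra! h
    have hHG : H = closure G := (sdiff_eq_empty.1 h).antisymm hGH
    rcases isClopen_iff.1 ⟨hHG ▸ isClosed_closure, hH⟩ with h | h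
    exacts [hHne.ne_empty h, hHuniv h]
  have hpos : 0 < volume.real (H \ closure G) :=
    ENNReal.toReal_pos ((hH.sdiff isClosed_closure).measure_pos volume hdiff).ne'
      (measure_ne_top _ _)
  show volume.real G < volume.real H
  linarith [measureReal_mono (μ := volume) (subset_closure (s := G)),
    measureReal_sdiff (μ := volume) hGH isClosed_closure.measurableSet]

theorem stmt4_general (Q B : Set S1) (hQcl : IsClosed Q) (hBcl : IsClosed B)
    (hB3 : ∃ a b c : S1, a ∈ B ∧ b ∈ B ∧ c ∈ B ∧ a ≠ b ∧ a ≠ c ∧ b ≠ c)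
    (hQ3 : ∃ a b c : S1, a ∈ Q ∧ b ∈ Q ∧ c ∈ Q ∧ a ≠ b ∧ a ≠ c ∧ b ≠ c)
    (hunl : Disjoint (CH Q) (CH B)) (τ : ℝ)
    (hQh : ∃ H1 H2 : Set S1, IsHole Q H1 ∧ IsHole Q H2 ∧ H1 ≠ H2 ∧
      τ ≤ len H1 ∧ τ ≤ len H2) :
    ∃ H : Set S1, IsHole B H ∧ Q ⊆ H ∧ τ < len H := by
  obtain ⟨q, -, -, hq, -⟩ := hQ3
  obtain ⟨b, -, -, hb, -⟩ := hB3
  obtain ⟨q₀, hq₀, hQH⟩ := exists_subset_connectedComponentIn_compl hQcl hBcl ⟨q, hq⟩ hunl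
  obtain ⟨b₀, -, hBG⟩ := exists_subset_connectedComponentIn_compl hBcl hQcl ⟨b, hb⟩ hunl.symm
  obtain ⟨_, ⟨x, hx, rfl⟩, hτG, hGB⟩ : ∃ G, IsHole Q G ∧ τ ≤ len G ∧ Disjoint G B := by
    obtain ⟨G₁, G₂, hG₁, hG₂, hne, hτ₁, hτ₂⟩ := hQh
    by_contra! h
    exact hne ((hG₁.eq_of_not_disjoint hBG (h G₁ hG₁ hτ₁)).trans
      (hG₂.eq_of_not_disjoint hBG (h G₂ hG₂ hτ₂)).symm)
  refine ⟨_, ⟨q₀, hq₀, rfl⟩, hQH, hτG.trans_lt (len_lt_len_of_closure_subset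
    hBcl.isOpen_compl.connectedComponentIn ⟨q₀, mem_connectedComponentIn hq₀⟩ ?_
    (closure_connectedComponentIn_compl_subset hQcl ⟨q, hq⟩ hx hQH hGB))⟩
  exact fun h => connectedComponentIn_subset Bᶜ q₀ (h ▸ mem_univ b) hb

/-- an unlinked set is contained in a long hole. -/
theorem stmt4 (Q B : Set S1) (hQcl : IsClosed Q) (hBcl : IsClosed B)
    (hB3 : ∃ a b c : S1, a ∈ B ∧ b ∈ B ∧ c ∈ B ∧ a ≠ b ∧ a ≠ c ∧ b ≠ c)
    (hQ3 : ∃ a b c : S1, a ∈ Q ∧ b ∈ Q ∧ c ∈ Q ∧ a ≠ b ∧ a ≠ c ∧ b ≠ c)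
    (hunl : Disjoint (CH Q) (CH B)) (τ : ℝ) (hτ : 0 < τ)
    (hBh : ∃ H1 H2 : Set S1, IsHole B H1 ∧ IsHole B H2 ∧ H1 ≠ H2 ∧
      τ ≤ len H1 ∧ τ ≤ len H2)
    (hQh : ∃ H1 H2 : Set S1, IsHole Q H1 ∧ IsHole Q H2 ∧ H1 ≠ H2 ∧
      τ ≤ len H1 ∧ τ ≤ len H2) :
    ∃ H : Set S1, IsHole B H ∧ Q ⊆ H ∧ τ < len H :=
  stmt4_general Q B hQcl hBcl hB3 hQ3 hunl τ hQh
end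
end

section
/- Let p and q be two chords of the unit circle that are disjoint in the open unit disk, and suppose a chord l separates p from q in the open disk. Then ρ(p, l) + ρ(q, l) = ρ(p, q), where ρ denotes the amount of arc between two disjoint chords. -/
open MeasureTheory Set Metric Filter Topology

noncomputable section

/-!
Measure the counterclockwise arc from `x` to `y` by `arcLength x y`, the fractional part of a
real lift of `y - x`. An open arc has Lebesgue measure equal to its `arcLength`, and `arcLength`
is additive along strictly ordered triples, so
`ρ(p,l) + ρ(l,q) = (len(b,u) + len(u,c)) + (len(e,v) + len(v,a)) = len(b,c) + len(e,a)`.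
-/

section ArcLength

/-- Taken in `[0, 1)`, so that `arcLength x x = 0`, matching `openArc x x = ∅`. -/
def arcLength (x y : S1) : ℝ := AddCircle.equivIco 1 0 (y - x)

lemma arcLength_coe (α β : ℝ) : arcLength α β = Int.fract (β - α) := by
  rw [arcLength, ← QuotientAddGroup.mk_sub, AddCircle.coe_equivIco_mk_apply, div_one, mul_one]

lemma arcLength_mem_Ico (x y : S1) : arcLength x y ∈ Ico (0 : ℝ) 1 := by
  have h := (AddCircle.equivIco 1 0 (y - x)).2
  simp only [mem_Ico, zero_add] at h
  exact h

lemma coe_arcLength (x y : S1) : (arcLength x y : S1) = y - x :=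
  (AddCircle.equivIco 1 0).symm_apply_apply (y - x)

lemma arcLength_eq_fract_sub (x y z : S1) :
    arcLength y z = Int.fract (arcLength x z - arcLength x y) := by
  rw [← arcLength_coe, coe_arcLength, coe_arcLength, arcLength, arcLength,
    sub_sub_sub_cancel_right]

lemma sbtw_iff_arcLength (x y z : S1) :
    SBtw.sbtw x y z ↔ 0 < arcLength x y ∧ arcLength x y < arcLength x z := by
  induction x using QuotientAddGroup.induction_on with | H α =>
  induction y using QuotientAddGroup.induction_on with | H β =>
  induction z using QuotientAddGroup.induction_on with | H γ =>
  have hzy : toIcoMod zero_lt_one 0 (β - γ) = arcLength γ β := by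
    rw [arcLength_coe, toIcoMod_eq_fract_mul, div_one, mul_one]
  have hzx : toIocMod zero_lt_one 0 (α - γ) = 1 - arcLength α γ := by
    rw [toIocMod_zero_sub_comm, arcLength_coe, toIcoMod_eq_fract_mul, div_one, mul_one]
  rw [sbtw_iff_not_btw, QuotientAddGroup.btw_coe_iff', not_le, hzy, hzx,
    arcLength_eq_fract_sub (α : S1) (γ : S1) (β : S1)]
  obtain ⟨hs₀, hs₁⟩ := arcLength_mem_Ico α β
  obtain ⟨ht₀, ht₁⟩ := arcLength_mem_Ico α γ
  set s := arcLength α β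
  set t := arcLength α γ
  rcases lt_or_ge s t with hst | hts
  · rw [← Int.fract_add_one, Int.fract_eq_self.2 ⟨by linarith, by linarith⟩]
    exact ⟨fun _ => ⟨by linarith, hst⟩, fun h => by linarith [h.1]⟩
  · rw [Int.fract_eq_self.2 ⟨by linarith, by linarith⟩]
    exact iff_of_false (not_lt.2 (by linarith)) (fun h => by linarith [h.2])

lemma arcLength_add_arcLength {x y z : S1} (h : SBtw.sbtw x y z) :
    arcLength x y + arcLength y z = arcLength x z := by
  obtain ⟨hs, hst⟩ := (sbtw_iff_arcLength x y z).1 h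
  have ht := (arcLength_mem_Ico x z).2
  rw [arcLength_eq_fract_sub x y z, Int.fract_eq_self.2 ⟨by linarith, by linarith⟩]
  ring

lemma measurable_arcLength (x : S1) : Measurable (arcLength x) :=
  measurable_subtype_coe.comp <|
    (AddCircle.measurableEquivIco 1 0).measurable.comp (measurable_id.sub_const x)

lemma openArc_eq_preimage_arcLength (u w : S1) :
    openArc u w = arcLength u ⁻¹' Ioo 0 (arcLength u w) :=
  ext fun y => sbtw_iff_arcLength u y w

lemma volume_openArc (u w : S1) : volume (openArc u w) = ENNReal.ofReal (arcLength u w) := by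
  induction u using QuotientAddGroup.induction_on with | H α =>
  have ht := arcLength_mem_Ico α w
  set t := arcLength α w
  have hlift : QuotientAddGroup.mk ⁻¹' openArc (α : S1) w ∩ Ioc α (α + 1) = Ioo α (α + t) := by
    ext ξ
    simp only [openArc_eq_preimage_arcLength, mem_inter_iff, mem_preimage, mem_Ioo, mem_Ioc,
      arcLength_coe]
    constructor
    · rintro ⟨⟨h₀, hξt⟩, hαξ, hξ₁⟩
      rcases hξ₁.lt_or_eq with hξ₁ | rfl
      · rw [Int.fract_eq_self.2 ⟨by linarith, by linarith⟩] at hξt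
        exact ⟨hαξ, by linarith⟩
      · simp at h₀
    · rintro ⟨hαξ, hξt⟩
      rw [Int.fract_eq_self.2 ⟨by linarith, by linarith [ht.2]⟩]
      exact ⟨⟨by linarith, by linarith⟩, hαξ, by linarith [ht.2]⟩
  rw [AddCircle.add_projection_respects_measure 1 α ((openArc_eq_preimage_arcLength α w) ▸
    measurable_arcLength α measurableSet_Ioo), hlift, Real.volume_Ioo, add_sub_cancel_left]

lemma len_openArc_s7 (u w : S1) : len (openArc u w) = arcLength u w := by
  rw [len, volume_openArc, ENNReal.toReal_ofReal (arcLength_mem_Ico u w).1]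

end ArcLength

/-- With `p = (a,b)`, `l = (u,v)`, `q = (c,e)`: `ρ(p,l) = len(b,u) + len(v,a)`,
`ρ(l,q) = len(u,c) + len(e,v)` and `ρ(p,q) = len(b,c) + len(e,a)`. -/
theorem stmt7_general (a b u c e v : S1)
    (h2 : SBtw.sbtw b u c) (h5 : SBtw.sbtw e v a) :
    (len (openArc b u) + len (openArc v a)) +
      (len (openArc u c) + len (openArc e v)) =
    len (openArc b c) + len (openArc e a) := by
  simp only [len_openArc_s7, ← arcLength_add_arcLength h2, ← arcLength_add_arcLength h5]
  ring

/-- additivity of the amount of arc ρ when a chord l = (u,v) separates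
p = (a,b) from q = (c,e); the six endpoints lie in cyclic order a,b,u,c,e,v.
ρ(p,l) = len(b,u)+len(v,a), ρ(l,q) = len(u,c)+len(e,v), ρ(p,q) = len(b,c)+len(e,a). -/
theorem stmt7 (a b u c e v : S1)
    (h1 : SBtw.sbtw a b u) (h2 : SBtw.sbtw b u c) (h3 : SBtw.sbtw u c e)
    (h4 : SBtw.sbtw c e v) (h5 : SBtw.sbtw e v a) :
    (len (openArc b u) + len (openArc v a)) +
      (len (openArc u c) + len (openArc e v)) =
    len (openArc b c) + len (openArc e a) :=
  stmt7_general a b u c e v h2 h5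
end
end

section
/- Let f(z) = z^d on S^1 with d ≥ 2. If p and q are two distinct critical chords of S^1 that are disjoint in the open unit disk, then ρ(p, q) ≥ 1/d. -/
open MeasureTheory Set Metric Filter Topology

noncomputable section

/-!
Lift the endpoints to reals `A < B ≤ C < E ≤ A + 1`. Then `ρ(p, q) = (C - B) + (A + 1 - E)`, so
`d ρ = d - d (B - A) - d (E - C)`, an integer because both chords are critical. It is positive
because the chords are distinct, hence `d ρ ≥ 1`.
-/

section

variable {α : Type*} [AddCommGroup α] [LinearOrder α] [IsOrderedAddMonoid α] [Archimedean α]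
  {p : α}

theorem QuotientAddGroup.coe_toIcoMod (hp : 0 < p) (a b : α) :
    ((toIcoMod hp a b : α) : α ⧸ AddSubgroup.zmultiples p) = b := by
  rw [QuotientAddGroup.eq_iff_sub_mem, toIcoMod_sub_self]
  exact AddSubgroup.zsmul_mem_zmultiples _ _

theorem QuotientAddGroup.coe_toIocMod (hp : 0 < p) (a b : α) :
    ((toIocMod hp a b : α) : α ⧸ AddSubgroup.zmultiples p) = b := by
  rw [QuotientAddGroup.eq_iff_sub_mem, toIocMod_sub_self]
  exact AddSubgroup.zsmul_mem_zmultiples _ _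

theorem QuotientAddGroup.sbtw_coe_iff [hp : Fact (0 < p)] {x₁ x₂ x₃ : α} :
    SBtw.sbtw (x₁ : α ⧸ AddSubgroup.zmultiples p) x₂ x₃ ↔
      toIocMod hp.out x₁ x₂ < toIcoMod hp.out x₁ x₃ := by
  rw [sbtw_iff_not_btw, btw_cyclic, btw_coe_iff, not_le]

end

namespace AddCircle

variable {p : ℝ}

theorem exists_int_mul_eq_of_nsmul_coe_eq {d : ℕ} {x y : ℝ}
    (h : d • (x : AddCircle p) = d • (y : AddCircle p)) : ∃ n : ℤ, d * (y - x) = n * p := by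
  rw [← sub_eq_zero, ← smul_sub, ← coe_sub, ← coe_nsmul, coe_eq_zero_iff] at h
  obtain ⟨n, hn⟩ := h
  rw [zsmul_eq_mul, nsmul_eq_mul] at hn
  exact ⟨-n, by push_cast; linear_combination hn⟩

variable [hp : Fact (0 < p)]

theorem volume_coe_image_Ioo (u : ℝ) {t : ℝ} (ht : t ≤ p) :
    volume (((↑) : ℝ → AddCircle p) '' Ioo u (u + t)) = ENNReal.ofReal t := by
  have hsub : Ioo u (u + t) ⊆ Ioc u (u + p) := fun x hx => ⟨hx.1, by linarith [hx.2]⟩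
  have hpre : ((↑) : ℝ → AddCircle p) ⁻¹' (((↑) : ℝ → AddCircle p) '' Ioo u (u + t)) ∩
      Ioc u (u + p) = Ioo u (u + t) := by
    refine Subset.antisymm ?_ fun x hx => ⟨⟨x, hx, rfl⟩, hsub hx⟩
    rintro x ⟨⟨y, hy, hyx⟩, hx⟩
    rwa [← (coe_eq_coe_iff_of_mem_Ioc (hsub hy) hx).1 hyx]
  rw [← (AddCircle.measurePreserving_mk p u).measure_preimage
    (QuotientAddGroup.isOpenMap_coe _ isOpen_Ioo).measurableSet.nullMeasurableSet,
    Measure.restrict_apply' measurableSet_Ioc, hpre, Real.volume_Ioo, add_sub_cancel_left]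

theorem exists_lift_mem_Ioo {a : ℝ} {y : AddCircle p} (hy : y ≠ a) :
    ∃ z ∈ Ioo a (a + p), (z : AddCircle p) = y :=
  ⟨_, (openPartialHomeomorphCoe p a).map_target hy, (openPartialHomeomorphCoe p a).right_inv hy⟩

theorem exists_lift_of_sbtw {a x : ℝ} (hx : x ∈ Ioo a (a + p)) {y : AddCircle p}
    (h : SBtw.sbtw (a : AddCircle p) x y) : ∃ z ∈ Ioo x (a + p), (z : AddCircle p) = y := by
  induction y using QuotientAddGroup.induction_on with
  | H y =>
    rw [QuotientAddGroup.sbtw_coe_iff, (toIocMod_eq_self hp.out).2 (Ioo_subset_Ioc_self hx)] at h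
    exact ⟨toIcoMod hp.out a y, ⟨h, toIcoMod_lt_right _ _ _⟩, QuotientAddGroup.coe_toIcoMod _ _ _⟩

theorem exists_ordered_lifts {a b c e : AddCircle p} (hab : a ≠ b)
    (hbc : SBtw.sbtw a b c ∨ b = c) (hea : SBtw.sbtw c e a ∨ e = a) :
    ∃ A B C E : ℝ, A < B ∧ B ≤ C ∧ C < E ∧ E ≤ A + p ∧
      (A : AddCircle p) = a ∧ (B : AddCircle p) = b ∧ (C : AddCircle p) = c ∧
      (E : AddCircle p) = e := by
  obtain ⟨A, rfl⟩ := QuotientAddGroup.mk_surjective a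
  obtain ⟨B, hB, rfl⟩ := exists_lift_mem_Ioo hab.symm
  obtain ⟨C, hC, hBC, rfl⟩ : ∃ C ∈ Ioo A (A + p), B ≤ C ∧ (C : AddCircle p) = c := by
    rcases hbc with hbc | rfl
    · obtain ⟨C, hC, rfl⟩ := exists_lift_of_sbtw hB hbc
      exact ⟨C, ⟨hB.1.trans hC.1, hC.2⟩, hC.1.le, rfl⟩
    · exact ⟨B, hB, le_rfl, rfl⟩
  obtain ⟨E, hE, rfl⟩ : ∃ E ∈ Ioc C (A + p), (E : AddCircle p) = e := by
    rcases hea with hea | rfl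
    · obtain ⟨E, hE, rfl⟩ := exists_lift_of_sbtw hC (sbtw_cyclic_right hea)
      exact ⟨E, Ioo_subset_Ioc_self hE, rfl⟩
    · exact ⟨A + p, ⟨hC.2, le_rfl⟩, coe_add_period p A⟩
  exact ⟨A, B, C, E, hB.1, hBC, hE.1, hE.2, rfl, rfl, rfl, rfl⟩

end AddCircle

theorem openArc_coe_add (u : ℝ) {t : ℝ} (ht0 : 0 ≤ t) (ht1 : t < 1) :
    openArc (u : S1) ↑(u + t) = ((↑) : ℝ → S1) '' Ioo u (u + t) := by
  have hut : toIcoMod one_pos u (u + t) = u + t :=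
    (toIcoMod_eq_self _).2 ⟨by linarith, by linarith⟩
  ext x
  constructor
  · intro h
    induction x using QuotientAddGroup.induction_on with
    | H x =>
      rw [openArc, mem_ofPred_eq, QuotientAddGroup.sbtw_coe_iff, hut] at h
      exact ⟨toIocMod one_pos u x, ⟨left_lt_toIocMod _ _ _, h⟩,
        QuotientAddGroup.coe_toIocMod _ _ _⟩
  · rintro ⟨y, hy, rfl⟩
    rw [openArc, mem_ofPred_eq, QuotientAddGroup.sbtw_coe_iff, hut,
      (toIocMod_eq_self _).2 ⟨hy.1, by linarith [hy.2]⟩]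
    exact hy.2

theorem len_openArc_coe_add (u : ℝ) {t : ℝ} (ht0 : 0 ≤ t) (ht1 : t < 1) :
    len (openArc (u : S1) ↑(u + t)) = t := by
  rw [len, openArc_coe_add u ht0 ht1, AddCircle.volume_coe_image_Ioo u ht1.le,
    ENNReal.toReal_ofReal ht0]

theorem stmt8_general (d : ℕ) (hd : 2 ≤ d) (a b c e : S1)
    (hab : a ≠ b)
    (hcr1 : fd d a = fd d b) (hcr2 : fd d c = fd d e)
    (hne : ({a, b} : Set S1) ≠ ({c, e} : Set S1))
    (ho1 : SBtw.sbtw a b c ∨ b = c) (ho2 : SBtw.sbtw c e a ∨ e = a) :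
    1 / (d : ℝ) ≤ len (openArc b c) + len (openArc e a) := by
  obtain ⟨A, B, C, E, hAB, hBC, hCE, hEA, rfl, rfl, rfl, rfl⟩ :=
    AddCircle.exists_ordered_lifts hab ho1 ho2
  obtain ⟨j, hj⟩ := AddCircle.exists_int_mul_eq_of_nsmul_coe_eq hcr1
  obtain ⟨k, hk⟩ := AddCircle.exists_int_mul_eq_of_nsmul_coe_eq hcr2
  have hbc := len_openArc_coe_add B (sub_nonneg.2 hBC) (by linarith)
  have hea := len_openArc_coe_add E (t := A + 1 - E) (by linarith) (by linarith)
  rw [add_sub_cancel] at hbc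
  rw [add_sub_cancel, AddCircle.coe_add_period] at hea
  rw [hbc, hea]
  have hpos : 0 < (C - B) + (A + 1 - E) := by
    by_contra! h
    obtain ⟨rfl, rfl⟩ : C = B ∧ E = A + 1 := ⟨by linarith, by linarith⟩
    exact hne (by rw [AddCircle.coe_add_period, pair_comm])
  have hd0 : (0 : ℝ) < d := Nat.cast_pos.2 (by omega)
  have hmul_eq : (d : ℝ) * ((C - B) + (A + 1 - E)) = ((d - j - k : ℤ) : ℝ) := by
    push_cast; linear_combination -hj - hk
  have hmul_pos : (0 : ℤ) < d - j - k := by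
    have := mul_pos hd0 hpos
    rw [hmul_eq] at this
    exact_mod_cast this
  rw [div_le_iff₀ hd0, mul_comm, hmul_eq]
  exact_mod_cast hmul_pos

/-- two distinct critical chords disjoint in the open disk, with
endpoints in (weak) cyclic order a,b,c,e, have ρ = len(b,c)+len(e,a) ≥ 1/d. -/
theorem stmt8 (d : ℕ) (hd : 2 ≤ d) (a b c e : S1)
    (hab : a ≠ b) (hce : c ≠ e)
    (hcr1 : fd d a = fd d b) (hcr2 : fd d c = fd d e)
    (hne : ({a, b} : Set S1) ≠ ({c, e} : Set S1))
    (ho1 : SBtw.sbtw a b c ∨ b = c) (ho2 : SBtw.sbtw c e a ∨ e = a) :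
    1 / (d : ℝ) ≤ len (openArc b c) + len (openArc e a) :=
  stmt8_general d hd a b c e hab hcr1 hcr2 hne ho1 ho2
end
end
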